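/- Let A ∈ ℝ^{m×n} with m ≥ 2 have no zero rows, let x⋆ ∈ ℝ^n lie in the row space of A, and set b = A x⋆. Let σ ≥ 0 be a constant such that ‖A v‖² ≥ σ² ‖v‖² for every v in the row space of A, and let γ = ‖A‖_F² - min_{i∈{1,...,m}} ‖A_i‖². Let x ∈ ℝ^n be such that x - x⋆ lies in the row space of A, let i⁻ ∈ {1,...,m} satisfy A_{i⁻} x = b_{i⁻}, and let S = {1,...,m} \ {i⁻}. For i ∈ S let x'(i) denote the Kaczmarz update of x with row i. Then with probabilities proportional to squared row norms, ∑_{i∈S} (‖A_i‖² / ∑_{j∈S} ‖A_j‖²) ‖x'(i) - x⋆‖² ≤ (1 - σ²/γ) ‖x - x⋆‖². -/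

import Mathlib

open RealInnerProductSpace

/-!
With `e = x - x⋆`, a Kaczmarz step with row `a` removes the component of `e` along `a`, so the
new squared error is `‖e‖² - ⟪a, e⟫² / ‖a‖²`. Averaging with weights `‖Aᵢ‖² / T` over `S`,
where `T = ∑_{j∈S} ‖Aⱼ‖²`, gives `‖e‖² - (∑_{i∈S} ⟪Aᵢ, e⟫²) / T`. Since row `i⁻` is already
satisfied, the missing term `⟪A_{i⁻}, e⟫` vanishes and the sum is the full `∑ᵢ ⟪Aᵢ, e⟫² ≥ σ² ‖e‖²`;
finally `T = ‖A‖_F² - ‖A_{i⁻}‖² ≤ γ`.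
-/

section KaczmarzStep

variable {E : Type*} [NormedAddCommGroup E] [InnerProductSpace ℝ E]

theorem norm_sub_inner_div_norm_sq_smul_sq (a e : E) :
    ‖e - (⟪a, e⟫ / ‖a‖ ^ 2) • a‖ ^ 2 = ‖e‖ ^ 2 - ⟪a, e⟫ ^ 2 / ‖a‖ ^ 2 := by
  rcases eq_or_ne a 0 with rfl | ha
  · simp
  have ha2 : ‖a‖ ^ 2 ≠ 0 := by positivity
  rw [norm_sub_sq_real, real_inner_smul_right, norm_smul, mul_pow, Real.norm_eq_abs, sq_abs,
    real_inner_comm e]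
  field_simp
  ring

theorem norm_kaczmarz_update_sub_sq (a x z : E) :
    ‖x - ((⟪a, x⟫ - ⟪a, z⟫) / ‖a‖ ^ 2) • a - z‖ ^ 2 = ‖x - z‖ ^ 2 - ⟪a, x - z⟫ ^ 2 / ‖a‖ ^ 2 := by
  rw [← inner_sub_right, ← norm_sub_inner_div_norm_sq_smul_sq, sub_right_comm]

end KaczmarzStep

theorem Finset.sum_div_sum_mul_sub_div {ι : Type*} (s : Finset ι) (w p : ι → ℝ) (c : ℝ)
    (hw : ∀ i ∈ s, w i ≠ 0) (hs : ∑ j ∈ s, w j ≠ 0) :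
    ∑ i ∈ s, (w i / ∑ j ∈ s, w j) * (c - p i / w i) = c - (∑ i ∈ s, p i) / ∑ j ∈ s, w j := by
  have hterm : ∀ i ∈ s, (w i / ∑ j ∈ s, w j) * (c - p i / w i)
      = c * (w i / ∑ j ∈ s, w j) - p i / ∑ j ∈ s, w j := fun i hi => by
    field_simp [hw i hi]
  rw [Finset.sum_congr rfl hterm, Finset.sum_sub_distrib, ← Finset.mul_sum, ← Finset.sum_div,
    ← Finset.sum_div, div_self hs, mul_one]

theorem Finset.sum_erase_le_sum_sub_iInf {ι : Type*} [Fintype ι] [DecidableEq ι] (f : ι → ℝ)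
    (k : ι) : ∑ i ∈ Finset.univ.erase k, f i ≤ ∑ i, f i - ⨅ i, f i := by
  have hk : (⨅ i, f i) ≤ f k := ciInf_le (Set.finite_range f).bddBelow k
  linarith [Finset.add_sum_erase Finset.univ f (Finset.mem_univ k)]

theorem nssrk_satisfies_bai_wu_bound_general {m n : ℕ} (hm : 2 ≤ m)
    (A : Fin m → EuclideanSpace ℝ (Fin n)) (hA : ∀ i, A i ≠ 0)
    (xstar : EuclideanSpace ℝ (Fin n))
    (b : Fin m → ℝ) (hb : ∀ i, b i = ⟪A i, xstar⟫)
    (σ : ℝ)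
    (hsv : ∀ v ∈ Submodule.span ℝ (Set.range A),
      σ ^ 2 * ‖v‖ ^ 2 ≤ ∑ i, ⟪A i, v⟫ ^ 2)
    (γ : ℝ) (hγ : γ = (∑ j, ‖A j‖ ^ 2) - ⨅ i, ‖A i‖ ^ 2)
    (x : EuclideanSpace ℝ (Fin n))
    (hx : x - xstar ∈ Submodule.span ℝ (Set.range A))
    (iprev : Fin m) (hiprev : ⟪A iprev, x⟫ = b iprev)
    (S : Finset (Fin m)) (hS : S = Finset.univ \ {iprev}) :
    ∑ i ∈ S, (‖A i‖ ^ 2 / ∑ j ∈ S, ‖A j‖ ^ 2) *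
        ‖(x - ((⟪A i, x⟫ - b i) / ‖A i‖ ^ 2) • A i) - xstar‖ ^ 2 ≤
      (1 - σ ^ 2 / γ) * ‖x - xstar‖ ^ 2 := by
  rw [Finset.sdiff_singleton_eq_erase] at hS
  subst hS
  set e := x - xstar
  set T := ∑ j ∈ Finset.univ.erase iprev, ‖A j‖ ^ 2
  set P := ∑ i, ⟪A i, e⟫ ^ 2
  have hT : 0 < T := by
    have : Nontrivial (Fin m) := Fin.nontrivial_iff_two_le.mpr hm
    obtain ⟨j, hj⟩ := exists_ne iprev
    exact Finset.sum_pos' (fun i _ => by positivity)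
      ⟨j, by simp [hj], pow_pos (norm_pos_iff.mpr (hA j)) 2⟩
  have hTγ : T ≤ γ := hγ ▸ Finset.sum_erase_le_sum_sub_iInf (fun i => ‖A i‖ ^ 2) iprev
  have hresidual : ∑ i ∈ Finset.univ.erase iprev, ⟪A i, e⟫ ^ 2 = P :=
    Finset.sum_erase _ (by rw [inner_sub_right, hiprev, hb, sub_self, sq, zero_mul])
  simp only [hb, norm_kaczmarz_update_sub_sq]
  rw [Finset.sum_div_sum_mul_sub_div _ _ _ _ (fun i _ => by simpa using hA i) hT.ne', hresidual]
  have hP : σ ^ 2 * ‖e‖ ^ 2 ≤ P := hsv e hx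
  calc ‖e‖ ^ 2 - P / T ≤ ‖e‖ ^ 2 - σ ^ 2 * ‖e‖ ^ 2 / γ := by
        gcongr ‖e‖ ^ 2 - ?_
        calc σ ^ 2 * ‖e‖ ^ 2 / γ ≤ P / γ := by gcongr; exact (hT.trans_le hTγ).le
          _ ≤ P / T := by gcongr
    _ = (1 - σ ^ 2 / γ) * ‖e‖ ^ 2 := by ring

/-- (Corollary 5 of the paper.) The NSSRK method with probabilities
proportional to the squared row norms satisfies the best-case Bai–Wu convergence bound:
with `γ = ‖A‖_F² - minᵢ ‖Aᵢ‖²` and `S = [m] \ {i⁻}` where the previously chosen row `i⁻`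
satisfies its equation,
`∑_{i∈S} (‖Aᵢ‖²/∑_{j∈S} ‖Aⱼ‖²) ‖x'(i) - x⋆‖² ≤ (1 - σ²/γ) ‖x - x⋆‖²`. -/
theorem nssrk_satisfies_bai_wu_bound {m n : ℕ} (hm : 2 ≤ m)
    (A : Fin m → EuclideanSpace ℝ (Fin n)) (hA : ∀ i, A i ≠ 0)
    (xstar : EuclideanSpace ℝ (Fin n))
    (hxstar : xstar ∈ Submodule.span ℝ (Set.range A))
    (b : Fin m → ℝ) (hb : ∀ i, b i = ⟪A i, xstar⟫)
    (σ : ℝ) (hσ : 0 ≤ σ)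
    (hsv : ∀ v ∈ Submodule.span ℝ (Set.range A),
      σ ^ 2 * ‖v‖ ^ 2 ≤ ∑ i, ⟪A i, v⟫ ^ 2)
    (γ : ℝ) (hγ : γ = (∑ j, ‖A j‖ ^ 2) - ⨅ i, ‖A i‖ ^ 2)
    (x : EuclideanSpace ℝ (Fin n))
    (hx : x - xstar ∈ Submodule.span ℝ (Set.range A))
    (iprev : Fin m) (hiprev : ⟪A iprev, x⟫ = b iprev)
    (S : Finset (Fin m)) (hS : S = Finset.univ \ {iprev}) :
    ∑ i ∈ S, (‖A i‖ ^ 2 / ∑ j ∈ S, ‖A j‖ ^ 2) *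
        ‖(x - ((⟪A i, x⟫ - b i) / ‖A i‖ ^ 2) • A i) - xstar‖ ^ 2 ≤
      (1 - σ ^ 2 / γ) * ‖x - xstar‖ ^ 2 :=
  nssrk_satisfies_bai_wu_bound_general hm A hA xstar b hb σ hsv γ hγ x hx iprev hiprev S hS
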